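/- arXiv:1709.04994 — 2 statements merged into one kernel-verified Lean document; each statement's English description precedes it below -/
import Mathlib

section
/- For λ in the upper half-plane, the function v defined by v(x) = α e^{i√λ x} + ᾱ e^{-i√λ x} for x ≥ 0 and v(x) = e^{√λ x} for x < 0, where α = (1 - i)/2, is continuously differentiable on ℝ and satisfies -v''(x) = λ·sgn(x)·v(x) for all x ≠ 0. -/
/-!
Both pieces of `v` are exponential solutions of `u'' = c² u`: with `s = √λ` and `s² = λ`, the
right piece has `c = i s`, so `-v'' = λ v`, and the left piece has `c = s`, so `-v'' = -λ v`.
The coefficient `α` is chosen so that the pieces agree to first order at `0`: `α + ᾱ = 1` matches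
the values and `i s (α - ᾱ) = s` matches the slopes. A function glued from two `C¹` functions
whose values and derivatives agree at the junction is `C¹`.
-/

open Complex

noncomputable def sqC (l : ℂ) : ℂ := l ^ (1/2 : ℂ)

noncomputable def alphaC : ℂ := (1 - Complex.I) / 2

open Set Filter Topology

theorem sqC_mul_self (l : ℂ) : sqC l * sqC l = l := by
  rw [sqC, ← sq, one_div, cpow_ofNat_inv_pow]

theorem alphaC_add_conj : alphaC + starRingEnd ℂ alphaC = 1 := by
  rw [alphaC, map_div₀, map_sub, map_one, conj_I, map_ofNat]; ring

theorem alphaC_sub_conj : alphaC - starRingEnd ℂ alphaC = -I := by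
  rw [alphaC, map_div₀, map_sub, map_one, conj_I, map_ofNat]; ring

section Gluing

variable {E : Type*} [NormedAddCommGroup E] [NormedSpace ℝ E] {f g v : ℝ → E} {a : ℝ}

theorem hasDerivAt_of_eqOn_Iio_of_eqOn_Ici (hf : Differentiable ℝ f) (hg : Differentiable ℝ g)
    (hv_lt : EqOn v g (Iio a)) (hv_ge : EqOn v f (Ici a))
    (h_eq : f a = g a) (h_deriv : deriv f a = deriv g a) (x : ℝ) :
    HasDerivAt v (if a ≤ x then deriv f x else deriv g x) x := by
  rcases lt_trichotomy x a with hx | rfl | hx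
  · rw [if_neg hx.not_ge]
    exact (hg x).hasDerivAt.congr_of_eventuallyEq (eventuallyEq_of_mem (Iio_mem_nhds hx) hv_lt)
  · have hv_le : EqOn v g (Iic x) := fun y (hy : y ≤ x) => by
      rcases hy.lt_or_eq with hy | rfl
      exacts [hv_lt hy, (hv_ge self_mem_Ici).trans h_eq]
    have h_left : HasDerivWithinAt v (deriv f x) (Iic x) x :=
      h_deriv ▸ (hg x).hasDerivAt.hasDerivWithinAt.congr hv_le (hv_le self_mem_Iic)
    have h_right : HasDerivWithinAt v (deriv f x) (Ici x) x :=
      (hf x).hasDerivAt.hasDerivWithinAt.congr hv_ge (hv_ge self_mem_Ici)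
    rw [if_pos le_rfl]
    simpa using (h_left.union h_right).hasDerivAt (by simp)
  · rw [if_pos hx.le]
    exact (hf x).hasDerivAt.congr_of_eventuallyEq
      (eventuallyEq_of_mem (Ioi_mem_nhds hx) (hv_ge.mono Ioi_subset_Ici_self))

theorem contDiff_one_of_eqOn_Iio_of_eqOn_Ici (hf : ContDiff ℝ 1 f) (hg : ContDiff ℝ 1 g)
    (hv_lt : EqOn v g (Iio a)) (hv_ge : EqOn v f (Ici a))
    (h_eq : f a = g a) (h_deriv : deriv f a = deriv g a) : ContDiff ℝ 1 v := by
  have hv := hasDerivAt_of_eqOn_Iio_of_eqOn_Ici (hf.differentiable one_ne_zero)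
    (hg.differentiable one_ne_zero) hv_lt hv_ge h_eq h_deriv
  refine contDiff_one_iff_deriv.mpr ⟨fun x => (hv x).differentiableAt, ?_⟩
  rw [show deriv v = _ from funext fun x => (hv x).deriv]
  exact Continuous.if_le (hf.continuous_deriv le_rfl) (hg.continuous_deriv le_rfl)
    continuous_const continuous_id fun x hx => hx ▸ h_deriv

end Gluing

section ExpPair

noncomputable def expPair (a b c : ℂ) (x : ℝ) : ℂ := a * cexp (c * x) + b * cexp (-c * x)

variable (a b c : ℂ)

theorem hasDerivAt_cexp_mul (x : ℝ) :
    HasDerivAt (fun x : ℝ => cexp (c * x)) (c * cexp (c * x)) x := by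
  simpa [mul_comm] using ((hasDerivAt_id (x : ℂ)).const_mul c).comp_ofReal.cexp

theorem hasDerivAt_expPair (x : ℝ) :
    HasDerivAt (expPair a b c) (expPair (c * a) (-(c * b)) c x) x := by
  have h : HasDerivAt (expPair a b c) _ x :=
    ((hasDerivAt_cexp_mul c x).const_mul a).add ((hasDerivAt_cexp_mul (-c) x).const_mul b)
  exact h.congr_deriv (by simp only [expPair]; ring)

theorem deriv_expPair : deriv (expPair a b c) = expPair (c * a) (-(c * b)) c :=
  funext fun x => (hasDerivAt_expPair a b c x).deriv

theorem deriv_deriv_expPair (x : ℝ) :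
    deriv (deriv (expPair a b c)) x = c ^ 2 * expPair a b c x := by
  simp only [deriv_expPair, expPair]; ring

theorem expPair_zero : expPair a b c 0 = a + b := by
  simp [expPair]

theorem contDiff_expPair {n : WithTop ℕ∞} : ContDiff ℝ n (expPair a b c) := by
  have h : ContDiff ℝ n ((↑) : ℝ → ℂ) := ofRealCLM.contDiff
  unfold expPair; fun_prop

end ExpPair

theorem v_solves_general (l : ℂ) (v : ℝ → ℂ)
    (hv_pos : ∀ x : ℝ, 0 ≤ x →
      v x = alphaC * Complex.exp (Complex.I * sqC l * x)
        + (starRingEnd ℂ) alphaC * Complex.exp (-(Complex.I * sqC l) * x))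
    (hv_neg : ∀ x : ℝ, x < 0 → v x = Complex.exp (sqC l * x)) :
    ContDiff ℝ 1 v ∧
      ∀ x : ℝ, x ≠ 0 → -(deriv (deriv v) x) = l * (Real.sign x : ℂ) * v x := by
  set s := sqC l
  set f := expPair alphaC (starRingEnd ℂ alphaC) (I * s)
  set g := expPair 1 0 s
  have hv_ge : EqOn v f (Ici 0) := fun x hx => hv_pos x hx
  have hv_lt : EqOn v g (Iio 0) := fun x hx => by simp [g, expPair, hv_neg x hx]
  refine ⟨contDiff_one_of_eqOn_Iio_of_eqOn_Ici (contDiff_expPair _ _ _) (contDiff_expPair _ _ _)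
    hv_lt hv_ge ?_ ?_, fun x hx => ?_⟩
  · rw [expPair_zero, expPair_zero, alphaC_add_conj, add_zero]
  · rw [deriv_expPair, deriv_expPair, expPair_zero, expPair_zero]
    linear_combination I * s * alphaC_sub_conj - s * I_mul_I
  rcases hx.lt_or_gt with hx | hx
  · rw [(eventuallyEq_of_mem (Iio_mem_nhds hx) hv_lt).deriv.deriv_eq, deriv_deriv_expPair,
      hv_lt hx, Real.sign_of_neg hx, sq, sqC_mul_self]
    push_cast; ring
  · rw [(eventuallyEq_of_mem (Ioi_mem_nhds hx) (hv_ge.mono Ioi_subset_Ici_self)).deriv.deriv_eq,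
      deriv_deriv_expPair, hv_ge hx.le, Real.sign_of_pos hx, mul_pow, I_sq, sq, sqC_mul_self]
    push_cast; ring

/-- The function v (v(x) = αe^{i√λ x} + ᾱe^{-i√λ x} for x ≥ 0, v(x) = e^{√λ x} for x < 0)
is continuously differentiable on ℝ and satisfies -v'' = λ·sgn·v away from 0. -/
theorem v_solves (l : ℂ) (hl : 0 < l.im) (v : ℝ → ℂ)
    (hv_pos : ∀ x : ℝ, 0 ≤ x →
      v x = alphaC * Complex.exp (Complex.I * sqC l * x)
        + (starRingEnd ℂ) alphaC * Complex.exp (-(Complex.I * sqC l) * x))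
    (hv_neg : ∀ x : ℝ, x < 0 → v x = Complex.exp (sqC l * x)) :
    ContDiff ℝ 1 v ∧
      ∀ x : ℝ, x ≠ 0 → -(deriv (deriv v) x) = l * (Real.sign x : ℂ) * v x :=
  v_solves_general l v hv_pos hv_neg
end

section
/- Let f : ℝ → ℂ with f, f' locally absolutely continuous, f ∈ L²(ℝ), f and f' vanishing at ±∞, and sgn(t)(-f''(t) + q(t)f(t)) = λ f(t), where q ∈ L¹(ℝ) is real and Im λ ≠ 0. Define U(x) = ∫_x^∞ sgn(t)|f(t)|² dt and V(x) = ∫_x^∞ (|f'(t)|² + q(t)|f(t)|²) dt. Then λ U(x) = f'(x) conj(f(x)) + V(x) for all x ∈ ℝ. -/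
open MeasureTheory Filter Topology

/-!
Multiply the eigenvalue equation by `sgn t` (for `t ≠ 0`, so almost everywhere) to get
`-f'' + q f = λ sgn f`, then by `conj f`: `λ sgn |f|² = q |f|² - f'' conj f`. Integrating over
`(x, ∞)`, the term `∫ f'' conj f` is handled by integration by parts against
`(f' conj f)' = f'' conj f + |f'|²`, whose boundary term at `∞` vanishes because `f, f' → 0`.
-/

namespace Real

theorem measurable_sign : Measurable Real.sign :=
  Measurable.ite measurableSet_Iio measurable_const
    (Measurable.ite measurableSet_Ioi measurable_const measurable_const)

theorem abs_sign_le_one (r : ℝ) : |sign r| ≤ 1 := by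
  rcases sign_apply_eq r with h | h | h <;> simp [h]

theorem sign_mul_self_of_ne_zero {r : ℝ} (hr : r ≠ 0) : sign r * sign r = 1 := by
  rcases sign_apply_eq_of_ne_zero r hr with h | h <;> simp [h]

end Real

theorem MeasureTheory.Integrable.sign_mul {α : Type*} [MeasurableSpace α] {μ : Measure α}
    {g : α → ℝ} (hg : Integrable g μ) {φ : α → ℝ} (hφ : Measurable φ) :
    Integrable (fun a => Real.sign (φ a) * g a) μ :=
  hg.bdd_mul (Real.measurable_sign.comp hφ).aestronglyMeasurable
    (ae_of_all _ fun a => by simpa using Real.abs_sign_le_one (φ a))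

theorem lam_mul_sign_mul_norm_sq_of_eigen {t q : ℝ} {lam u u'' : ℂ} (ht : t ≠ 0)
    (h : (Real.sign t : ℂ) * (-u'' + q * u) = lam * u) :
    lam * ((Real.sign t * ‖u‖ ^ 2 : ℝ) : ℂ) = ((q * ‖u‖ ^ 2 : ℝ) : ℂ) - u'' * starRingEnd ℂ u := by
  have hs : (Real.sign t : ℂ) * Real.sign t = 1 := by
    exact_mod_cast Real.sign_mul_self_of_ne_zero ht
  push_cast
  rw [← Complex.mul_conj']
  linear_combination (-(Real.sign t : ℂ) * starRingEnd ℂ u) * h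
    + starRingEnd ℂ u * (-u'' + q * u) * hs

theorem integral_Ioi_deriv_deriv_mul_conj {f : ℝ → ℂ} {x : ℝ}
    (hf : Differentiable ℝ f) (hf' : Differentiable ℝ (deriv f))
    (hlim : Tendsto (fun t => deriv f t * starRingEnd ℂ (f t)) atTop (𝓝 0))
    (hf''f : IntegrableOn (fun t => deriv (deriv f) t * starRingEnd ℂ (f t)) (Set.Ioi x))
    (hf'_sq : IntegrableOn (fun t => ‖deriv f t‖ ^ 2) (Set.Ioi x)) :
    ∫ t in Set.Ioi x, deriv (deriv f) t * starRingEnd ℂ (f t) =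
      -(deriv f x * starRingEnd ℂ (f x)) - ((∫ t in Set.Ioi x, ‖deriv f t‖ ^ 2 : ℝ) : ℂ) := by
  have hf'f' : IntegrableOn (fun t => deriv f t * starRingEnd ℂ (deriv f t)) (Set.Ioi x) := by
    have hC : IntegrableOn (fun t => ((‖deriv f t‖ ^ 2 : ℝ) : ℂ)) (Set.Ioi x) := hf'_sq.ofReal
    simpa only [Complex.mul_conj, Complex.normSq_eq_norm_sq] using hC
  have hderiv : ∀ t ∈ Set.Ici x, HasDerivAt (fun t => deriv f t * starRingEnd ℂ (f t))
      (deriv (deriv f) t * starRingEnd ℂ (f t) + deriv f t * starRingEnd ℂ (deriv f t)) t :=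
    fun t _ => (hf' t).hasDerivAt.mul (hf t).hasDerivAt.star
  have hibp := integral_Ioi_of_hasDerivAt_of_tendsto' hderiv (hf''f.add hf'f') hlim
  rw [integral_add hf''f hf'f'] at hibp
  simp only [Complex.mul_conj, Complex.normSq_eq_norm_sq, integral_complex_ofReal] at hibp
  linear_combination hibp

theorem lambda_U_eq_general (q : ℝ → ℝ)
    (lam : ℂ) (f : ℝ → ℂ)
    (hf_diff : Differentiable ℝ f) (hf'_diff : Differentiable ℝ (deriv f))
    (hf_L2 : MemLp f 2) (hf'_L2 : MemLp (deriv f) 2)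
    (hqf2 : Integrable (fun t => q t * ‖f t‖ ^ 2))
    (hf_top : Tendsto f atTop (𝓝 0))
    (hf'_top : Tendsto (deriv f) atTop (𝓝 0))
    (heig : ∀ᵐ t : ℝ,
      (Real.sign t : ℂ) * (-(deriv (deriv f) t) + (q t : ℂ) * f t) = lam * f t) :
    ∀ x : ℝ,
      lam * ((∫ t in Set.Ioi x, Real.sign t * ‖f t‖ ^ 2 : ℝ) : ℂ) =
        deriv f x * (starRingEnd ℂ) (f x) +
          ((∫ t in Set.Ioi x, (‖deriv f t‖ ^ 2 + q t * ‖f t‖ ^ 2) : ℝ) : ℂ) := by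
  intro x
  have hf_sq : Integrable (fun t => ‖f t‖ ^ 2) := hf_L2.integrable_norm_pow two_ne_zero
  have hf'_sq : Integrable (fun t => ‖deriv f t‖ ^ 2) := hf'_L2.integrable_norm_pow two_ne_zero
  have hsgn : Integrable (fun t => ((Real.sign t * ‖f t‖ ^ 2 : ℝ) : ℂ)) :=
    (hf_sq.sign_mul measurable_id).ofReal
  have hqf2' : Integrable (fun t => ((q t * ‖f t‖ ^ 2 : ℝ) : ℂ)) := hqf2.ofReal
  have key : ∀ᵐ t : ℝ, lam * ((Real.sign t * ‖f t‖ ^ 2 : ℝ) : ℂ) =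
      ((q t * ‖f t‖ ^ 2 : ℝ) : ℂ) - deriv (deriv f) t * starRingEnd ℂ (f t) := by
    filter_upwards [heig, compl_mem_ae_iff.mpr (measure_singleton (0 : ℝ))] with t ht ht0
    exact lam_mul_sign_mul_norm_sq_of_eigen ht0 ht
  have hf''f : IntegrableOn (fun t => deriv (deriv f) t * starRingEnd ℂ (f t)) (Set.Ioi x) :=
    (hqf2'.sub (hsgn.const_mul lam)).restrict.congr
      (ae_restrict_of_ae (key.mono fun t ht => by simp only [Pi.sub_apply, ht]; ring))
  calc lam * ((∫ t in Set.Ioi x, Real.sign t * ‖f t‖ ^ 2 : ℝ) : ℂ)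
      = ∫ t in Set.Ioi x, lam * ((Real.sign t * ‖f t‖ ^ 2 : ℝ) : ℂ) := by
        rw [integral_const_mul, integral_complex_ofReal]
    _ = ∫ t in Set.Ioi x,
          (((q t * ‖f t‖ ^ 2 : ℝ) : ℂ) - deriv (deriv f) t * starRingEnd ℂ (f t)) :=
        integral_congr_ae (ae_restrict_of_ae key)
    _ = ((∫ t in Set.Ioi x, q t * ‖f t‖ ^ 2 : ℝ) : ℂ) -
          ∫ t in Set.Ioi x, deriv (deriv f) t * starRingEnd ℂ (f t) := by
        rw [integral_sub hqf2'.restrict hf''f, integral_complex_ofReal]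
    _ = _ := by
        rw [integral_Ioi_deriv_deriv_mul_conj hf_diff hf'_diff
          (by simpa using hf'_top.mul hf_top.star) hf''f hf'_sq.integrableOn,
          integral_add hf'_sq.restrict hqf2.restrict]
        push_cast
        ring

/-- For an eigenfunction f of sgn(·)(-d²/dx² + q) with non-real eigenvalue λ,
vanishing together with f' at ±∞, the identity λU(x) = f'(x)·conj(f(x)) + V(x)
holds for all x, where U(x) = ∫_x^∞ sgn|f|² and V(x) = ∫_x^∞ (|f'|² + q|f|²). -/
theorem lambda_U_eq (q : ℝ → ℝ) (hq : Integrable q)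
    (lam : ℂ) (hlam : lam.im ≠ 0) (f : ℝ → ℂ)
    (hf_diff : Differentiable ℝ f) (hf'_diff : Differentiable ℝ (deriv f))
    (hf_L2 : MemLp f 2) (hf'_L2 : MemLp (deriv f) 2)
    (hqf2 : Integrable (fun t => q t * ‖f t‖ ^ 2))
    (hf_top : Tendsto f atTop (𝓝 0)) (hf_bot : Tendsto f atBot (𝓝 0))
    (hf'_top : Tendsto (deriv f) atTop (𝓝 0))
    (hf'_bot : Tendsto (deriv f) atBot (𝓝 0))
    (heig : ∀ᵐ t : ℝ,
      (Real.sign t : ℂ) * (-(deriv (deriv f) t) + (q t : ℂ) * f t) = lam * f t) :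
    ∀ x : ℝ,
      lam * ((∫ t in Set.Ioi x, Real.sign t * ‖f t‖ ^ 2 : ℝ) : ℂ) =
        deriv f x * (starRingEnd ℂ) (f x) +
          ((∫ t in Set.Ioi x, (‖deriv f t‖ ^ 2 + q t * ‖f t‖ ^ 2) : ℝ) : ℂ) :=
  lambda_U_eq_general q lam f hf_diff hf'_diff hf_L2 hf'_L2 hqf2 hf_top hf'_top heig
end
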